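/- arXiv:2006.08046 — 5 statements merged into one kernel-verified Lean document; each statement's English description precedes it below -/
import Mathlib

section
/- Let H be an infinite-dimensional complex separable Hilbert space, A ∈ B(H), 0 < L < ∞, and G ⊂ H a countable family of vectors. If {e^{tA}g}_{g∈G, t∈[0,L]} is a semi-continuous frame for H, then G is infinite. -/
/-!
If `G` were finite, then for every `n` the Krylov space `span {A^k g : k < n, g ∈ G}` would be
finite-dimensional, so some `e ≠ 0` is orthogonal to it. Then `⟪e, e^{tA} g⟫` only sees the tail
`∑_{k ≥ n} (tA)^k g / k!` of the exponential series, which for `t ∈ [0, L]` has norm at most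
`‖g‖ ∑_{k ≥ n} (L‖A‖)^k / k!`. Hence the lower frame bound `c` is at most
`L (∑_{k ≥ n} (L‖A‖)^k / k!)^2 ∑_{g ∈ G} ‖g‖^2`, which tends to `0` as `n → ∞`.
-/

open MeasureTheory
open scoped ComplexInnerProductSpace

noncomputable section

variable {H : Type*} [NormedAddCommGroup H] [InnerProductSpace ℂ H] [CompleteSpace H]

/-- The operator exponential `e^{tA}` for a bounded operator `A`. -/
def expT (A : H →L[ℂ] H) (t : ℝ) : H →L[ℂ] H :=
  NormedSpace.exp ((t : ℂ) • A)

/-- `G` is a Bessel system in `H`. -/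
def IsBesselSet (G : Set H) : Prop :=
  ∃ K > (0 : ℝ), ∀ f : H, ∑' g : G, ‖⟪f, (g : H)⟫‖ ^ 2 ≤ K * ‖f‖ ^ 2

/-- `{e^{tA} g}_{g ∈ G, t ∈ S}` is a semi-continuous frame for `H`. -/
def SemiContFrame (A : H →L[ℂ] H) (G : Set H) (S : Set ℝ) : Prop :=
  ∃ c > (0 : ℝ), ∃ C > (0 : ℝ), ∀ f : H,
    c * ‖f‖ ^ 2 ≤ ∑' g : G, ∫ t in S, ‖⟪f, expT A t (g : H)⟫‖ ^ 2 ∧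
    ∑' g : G, ∫ t in S, ‖⟪f, expT A t (g : H)⟫‖ ^ 2 ≤ C * ‖f‖ ^ 2

/-- `{e^{t_j A} g}_{g ∈ G, j}` is a frame for `H`, for a finite list of times `t`. -/
def FinTimeFrame (A : H →L[ℂ] H) (G : Set H) {n : ℕ} (t : Fin n → ℝ) : Prop :=
  ∃ c > (0 : ℝ), ∃ C > (0 : ℝ), ∀ f : H,
    c * ‖f‖ ^ 2 ≤ ∑' g : G, ∑ j, ‖⟪f, expT A (t j) (g : H)⟫‖ ^ 2 ∧
    ∑' g : G, ∑ j, ‖⟪f, expT A (t j) (g : H)⟫‖ ^ 2 ≤ C * ‖f‖ ^ 2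

/-- `{e^{t_j A} g}_{g ∈ G, j ∈ ℕ}` is a frame for `H`, for a countable set of times `t`. -/
def NatTimeFrame (A : H →L[ℂ] H) (G : Set H) (t : ℕ → ℝ) : Prop :=
  ∃ c > (0 : ℝ), ∃ C > (0 : ℝ), ∀ f : H,
    c * ‖f‖ ^ 2 ≤ ∑' g : G, ∑' j : ℕ, ‖⟪f, expT A (t j) (g : H)⟫‖ ^ 2 ∧
    ∑' g : G, ∑' j : ℕ, ‖⟪f, expT A (t j) (g : H)⟫‖ ^ 2 ≤ C * ‖f‖ ^ 2

/-- The semigroup `{e^{tA}}_{t ≥ 0}` is exponentially stable. -/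
def ExpStable (A : H →L[ℂ] H) : Prop :=
  ∃ M ≥ (1 : ℝ), ∃ ω < (0 : ℝ), ∀ t : ℝ, 0 ≤ t → ‖expT A t‖ ≤ M * Real.exp (ω * t)

open Filter Topology Finset
open scoped Nat

def expRemainder (n : ℕ) (q : ℝ) : ℝ :=
  Real.exp q - ∑ k ∈ range n, q ^ k / k !

theorem hasSum_expRemainder (n : ℕ) (q : ℝ) :
    HasSum (fun k => q ^ (k + n) / (k + n)!) (expRemainder n q) :=
  (hasSum_nat_add_iff' n).mpr (Real.exp_eq_exp_ℝ ▸ NormedSpace.expSeries_div_hasSum_exp q)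

theorem tendsto_expRemainder (q : ℝ) : Tendsto (expRemainder · q) atTop (𝓝 0) := by
  have h := (Real.exp_eq_exp_ℝ ▸ NormedSpace.expSeries_div_hasSum_exp q).tendsto_sum_nat
  simpa [expRemainder] using (tendsto_const_nhds (x := Real.exp q)).sub h

section exponential

variable {𝕜 E : Type*} [RCLike 𝕜] [NormedAddCommGroup E] [NormedSpace 𝕜 E]

theorem ContinuousLinearMap.norm_pow_apply_le (B : E →L[𝕜] E) (k : ℕ) (x : E) :
    ‖(B ^ k) x‖ ≤ ‖B‖ ^ k * ‖x‖ := by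
  induction k with
  | zero => simp
  | succ k ih =>
    calc ‖(B ^ (k + 1)) x‖ = ‖B ((B ^ k) x)‖ := by rw [pow_succ']; rfl
      _ ≤ ‖B‖ * (‖B‖ ^ k * ‖x‖) := B.le_opNorm_of_le ih
      _ = ‖B‖ ^ (k + 1) * ‖x‖ := by ring

theorem ContinuousLinearMap.norm_exp_apply_sub_sum_le [CompleteSpace E] {B : E →L[𝕜] E} {q : ℝ}
    (hB : ‖B‖ ≤ q) (n : ℕ) (x : E) :
    ‖NormedSpace.exp B x - ∑ k ∈ range n, (k !⁻¹ : 𝕜) • (B ^ k) x‖ ≤ expRemainder n q * ‖x‖ := by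
  have hexp : HasSum (fun k => (k !⁻¹ : 𝕜) • (B ^ k) x) (NormedSpace.exp B x) := by
    simpa using (NormedSpace.exp_series_hasSum_exp' (𝕂 := 𝕜) B).mapL (apply 𝕜 E x)
  refine ((hasSum_nat_add_iff' n).mpr hexp).norm_le_of_bounded
    ((hasSum_expRemainder n q).mul_right ‖x‖) fun k => ?_
  rw [norm_smul, norm_inv, RCLike.norm_natCast, div_mul_eq_mul_div, inv_mul_eq_div]
  gcongr
  exact (B.norm_pow_apply_le _ x).trans (by gcongr)

end exponential

section krylov

variable {R M : Type*} [Semiring R] [AddCommMonoid M] [Module R M]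

def krylovSpace (A : Module.End R M) (G : Set M) (n : ℕ) : Submodule R M :=
  Submodule.span R ((fun p : ℕ × M => (A ^ p.1) p.2) '' (Set.Iio n ×ˢ G))

theorem pow_apply_mem_krylovSpace (A : Module.End R M) {G : Set M} {g : M} (hg : g ∈ G) {k n : ℕ}
    (hk : k < n) : (A ^ k) g ∈ krylovSpace A G n :=
  Submodule.subset_span ⟨(k, g), ⟨hk, hg⟩, rfl⟩

end krylov

section orthogonal

variable {𝕜 E : Type*} [RCLike 𝕜] [NormedAddCommGroup E] [InnerProductSpace 𝕜 E]

theorem finiteDimensional_krylovSpace (A : Module.End 𝕜 E) {G : Set E} (hG : G.Finite) (n : ℕ) :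
    FiniteDimensional 𝕜 (krylovSpace A G n) :=
  FiniteDimensional.span_of_finite 𝕜 (((Set.finite_Iio n).prod hG).image _)

theorem exists_ne_zero_mem_orthogonal (hE : ¬ FiniteDimensional 𝕜 E) (K : Submodule 𝕜 E)
    [FiniteDimensional 𝕜 K] : ∃ e ∈ Kᗮ, e ≠ 0 := by
  have hK : K ≠ ⊤ := by
    rintro rfl
    exact hE (Submodule.topEquiv.finiteDimensional)
  exact Submodule.ne_bot_iff _ |>.mp ((Submodule.orthogonal_eq_bot_iff).not.mpr hK)

end orthogonal

theorem norm_inner_expT_le_of_mem_orthogonal {A : H →L[ℂ] H} {G : Set H} {n : ℕ} {e g : H}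
    {t q : ℝ} (he : e ∈ (krylovSpace (A : Module.End ℂ H) G n)ᗮ) (hg : g ∈ G)
    (hq : ‖(t : ℂ) • A‖ ≤ q) :
    ‖⟪e, expT A t g⟫‖ ≤ ‖e‖ * (expRemainder n q * ‖g‖) := by
  set P := ∑ k ∈ range n, (k !⁻¹ : ℂ) • (((t : ℂ) • A) ^ k) g
  have hP : P ∈ krylovSpace (A : Module.End ℂ H) G n := by
    refine Submodule.sum_mem _ fun k hk => Submodule.smul_mem _ _ ?_
    rw [smul_pow, smul_apply]
    refine Submodule.smul_mem _ _ ?_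
    simpa [Module.End.pow_apply] using
      pow_apply_mem_krylovSpace (A : Module.End ℂ H) hg (mem_range.mp hk)
  calc ‖⟪e, expT A t g⟫‖ = ‖⟪e, expT A t g - P⟫‖ := by
        rw [inner_sub_right, Submodule.inner_left_of_mem_orthogonal hP he, sub_zero]
    _ ≤ ‖e‖ * ‖expT A t g - P‖ := norm_inner_le_norm _ _
    _ ≤ ‖e‖ * (expRemainder n q * ‖g‖) := by
        gcongr
        exact ContinuousLinearMap.norm_exp_apply_sub_sum_le hq n g

theorem setIntegral_sq_norm_inner_expT_le {A : H →L[ℂ] H} {G : Set H} {n : ℕ} {e g : H} {L : ℝ}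
    (he : e ∈ (krylovSpace (A : Module.End ℂ H) G n)ᗮ) (hg : g ∈ G) (hL : 0 ≤ L) :
    ∫ t in Set.Icc 0 L, ‖⟪e, expT A t g⟫‖ ^ 2 ≤
      L * (‖e‖ * (expRemainder n (L * ‖A‖) * ‖g‖)) ^ 2 := by
  have hbound : ∀ t ∈ Set.Icc 0 L,
      ‖‖⟪e, expT A t g⟫‖ ^ 2‖ ≤ (‖e‖ * (expRemainder n (L * ‖A‖) * ‖g‖)) ^ 2 := by
    intro t ht
    have htA : ‖(t : ℂ) • A‖ ≤ L * ‖A‖ := by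
      rw [norm_smul, Complex.norm_real, Real.norm_of_nonneg ht.1]
      gcongr
      exact ht.2
    rw [norm_pow, norm_norm]
    exact pow_le_pow_left₀ (norm_nonneg _) (norm_inner_expT_le_of_mem_orthogonal he hg htA) 2
  calc ∫ t in Set.Icc 0 L, ‖⟪e, expT A t g⟫‖ ^ 2
      ≤ ‖∫ t in Set.Icc 0 L, ‖⟪e, expT A t g⟫‖ ^ 2‖ := le_abs_self _
    _ ≤ _ * volume.real (Set.Icc 0 L) :=
        norm_setIntegral_le_of_norm_le_const measure_Icc_lt_top hbound
    _ = _ := by rw [Real.volume_real_Icc_of_le hL, sub_zero, mul_comm]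

theorem stmt1_general
    {H : Type*} [NormedAddCommGroup H] [InnerProductSpace ℂ H] [CompleteSpace H]
    (hinf : ¬ FiniteDimensional ℂ H)
    (A : H →L[ℂ] H) (L : ℝ) (hL : 0 < L)
    (G : Set H)
    (hframe : SemiContFrame A G (Set.Icc 0 L)) :
    G.Infinite := by
  intro hfin
  have : Finite G := hfin.to_subtype
  obtain ⟨c, hc, _, _, hframe⟩ := hframe
  set S := ∑' g : G, ‖(g : H)‖ ^ 2
  have hc_le : ∀ n, c ≤ L * expRemainder n (L * ‖A‖) ^ 2 * S := by
    intro n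
    have := finiteDimensional_krylovSpace (A : Module.End ℂ H) hfin n
    obtain ⟨e, he, he0⟩ :=
      exists_ne_zero_mem_orthogonal hinf (krylovSpace (A : Module.End ℂ H) G n)
    refine le_of_mul_le_mul_right ?_ (by positivity : 0 < ‖e‖ ^ 2)
    calc c * ‖e‖ ^ 2 ≤ ∑' g : G, ∫ t in Set.Icc 0 L, ‖⟪e, expT A t g⟫‖ ^ 2 := (hframe e).1
      _ ≤ ∑' g : G, L * (‖e‖ * (expRemainder n (L * ‖A‖) * ‖(g : H)‖)) ^ 2 :=
          Summable.tsum_le_tsum (fun g => setIntegral_sq_norm_inner_expT_le he g.2 hL.le)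
            .of_finite .of_finite
      _ = ∑' g : G, L * expRemainder n (L * ‖A‖) ^ 2 * ‖e‖ ^ 2 * ‖(g : H)‖ ^ 2 :=
          tsum_congr fun g => by ring
      _ = L * expRemainder n (L * ‖A‖) ^ 2 * S * ‖e‖ ^ 2 := by rw [tsum_mul_left]; ring
  have hlim : Tendsto (fun n => L * expRemainder n (L * ‖A‖) ^ 2 * S) atTop (𝓝 0) := by
    simpa using (((tendsto_expRemainder _).pow 2).const_mul L).mul_const S
  exact hc.not_ge (ge_of_tendsto' hlim hc_le)

theorem stmt1
    {H : Type*} [NormedAddCommGroup H] [InnerProductSpace ℂ H] [CompleteSpace H]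
    [TopologicalSpace.SeparableSpace H]
    (hinf : ¬ FiniteDimensional ℂ H)
    (A : H →L[ℂ] H) (L : ℝ) (hL : 0 < L)
    (G : Set H) (hGc : G.Countable)
    (hframe : SemiContFrame A G (Set.Icc 0 L)) :
    G.Infinite :=
  stmt1_general hinf A L hL G hframe

end
end

section
/- Let H be a complex separable Hilbert space, A ∈ B(H), and let G ⊂ H be a countable Bessel system. Assume the semigroup {e^{tA}}_{t≥0} is exponentially stable. Then the following are equivalent: (i) {e^{tA}g}_{g∈G, t∈[0,∞)} is a semi-continuous frame for H; (ii) there exists δ > 0 such that for every countable set T = {t_j : j ∈ ℕ} with t_1 = 0, t_j strictly increasing, inf_j (t_{j+1} − t_j) > 0, and t_{j+1} − t_j < δ for all j ∈ ℕ, the system {e^{tA}g}_{g∈G, t∈T} is a frame for H; (iii) there exists m > 0 such that for T = {j·m : j = 0, 1, 2, …} the system {e^{tA}g}_{g∈G, t∈T} is a frame for H. -/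
/-!
With `S(u) = e^{uA}` and `F_f(u) = ∑_g |⟪f, S(u) g⟫|²`, an honest Bessel bound `K` gives
`F_f(u) ≤ K ‖S(u)‖² ‖f‖²`, which decays like `e^{2ωu}`, and
`F_f(u) ≤ 2 F_f(s) + 2K ‖S(u) - S(s)‖² ‖f‖²`. Since `S(u) - S(s) = S(s) (S(u - s) - 1)`, the error
term is at most `ε ‖f‖² e^{2ωu}` whenever `0 ≤ u - s ≤ δ(ε)`. Integrating this comparison over
the intervals `[t_j, t_{j+1})` (resp. `[jm, jm + δ)`) bounds `∫₀^∞ F_f` by the samples `∑_j F_f(t_j)`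
and conversely, up to an error `O(ε) ‖f‖²` that is absorbed by the lower frame bound; the upper
frame bounds come from the exponential decay alone.

The Bessel bound is first made honest (summable): from the continuous frame, because the
coefficients of `S(u)* f` are square-summable for a.e. `u > 0` and `S(u)* f → f`; from the discrete
frame, through its `j = 0` term.
-/

open MeasureTheory
open scoped ComplexInnerProductSpace

noncomputable section

variable {H : Type*} [NormedAddCommGroup H] [InnerProductSpace ℂ H] [CompleteSpace H]

open Filter Topology Set
open scoped InnerProduct

theorem summable_of_tsum_ne_zero {ι : Type*} {a : ι → ℝ} (h : ∑' i, a i ≠ 0) : Summable a :=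
  by_contra fun hns => h (tsum_eq_zero_of_not_summable hns)

theorem ae_summable_of_summable_integral {α ι : Type*} [MeasurableSpace α] [Countable ι]
    {μ : Measure α} {a : ι → α → ℝ} (h0 : ∀ i x, 0 ≤ a i x) (hint : ∀ i, Integrable (a i) μ)
    (hsum : Summable fun i => ∫ x, a i x ∂μ) : ∀ᵐ x ∂μ, Summable fun i => a i x := by
  have hmeas : ∀ i, AEMeasurable (fun x => ENNReal.ofReal (a i x)) μ :=
    fun i => (hint i).aemeasurable.ennreal_ofReal
  have hfin : ∫⁻ x, ∑' i, ENNReal.ofReal (a i x) ∂μ ≠ ⊤ := by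
    rw [lintegral_tsum hmeas, ← tsum_congr fun i =>
      ofReal_integral_eq_lintegral_ofReal (hint i) (ae_of_all _ (h0 i)),
      ← ENNReal.ofReal_tsum_of_nonneg (fun i => integral_nonneg (h0 i)) hsum]
    exact ENNReal.ofReal_ne_top
  filter_upwards [ae_lt_top' (AEMeasurable.tsum hmeas) hfin] with x hx
  simpa [ENNReal.toReal_ofReal (h0 _ x)] using ENNReal.summable_toReal hx.ne

theorem frequently_nhdsGT_zero_of_ae_restrict_Ici {P : ℝ → Prop}
    (h : ∀ᵐ u ∂volume.restrict (Ici 0), P u) : ∃ᶠ u in 𝓝[>] 0, P u := by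
  intro hnot
  obtain ⟨ε, hε, hsub⟩ := mem_nhdsGT_iff_exists_Ioo_subset.1 hnot
  have hnull : volume.restrict (Ici 0) (Ioo 0 ε) = 0 := measure_mono_null hsub (ae_iff.1 h)
  rw [Measure.restrict_apply measurableSet_Ioo,
    inter_eq_left.2 (Ioo_subset_Ioi_self.trans Ioi_subset_Ici_self), Real.volume_Ioo,
    ENNReal.ofReal_eq_zero] at hnull
  linarith [mem_Ioi.1 hε]

section Sampling

variable {F : ℝ → ℝ} {ω B D δ : ℝ}

theorem integral_Ici_exp_mul (hω : ω < 0) : ∫ u in Ici (0 : ℝ), Real.exp (ω * u) = (-ω)⁻¹ := by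
  rw [integral_Ici_eq_integral_Ioi, integral_exp_mul_Ioi hω, mul_zero, Real.exp_zero, neg_div,
    ← div_neg, one_div]

theorem integrableOn_Ici_exp_mul (hω : ω < 0) :
    IntegrableOn (fun u => Real.exp (ω * u)) (Ici (0 : ℝ)) :=
  (integrableOn_Ici_iff_integrableOn_Ioi (by finiteness)).2 (integrableOn_exp_mul_Ioi hω 0)

theorem integrableOn_Ici_of_le_exp (hF0 : ∀ u, 0 ≤ F u) (hFm : Measurable F) (hω : ω < 0)
    (hF : ∀ u, 0 ≤ u → F u ≤ B * Real.exp (ω * u)) : IntegrableOn F (Ici 0) := by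
  refine Integrable.mono' ((integrableOn_Ici_exp_mul hω).const_mul B) hFm.aestronglyMeasurable ?_
  filter_upwards [ae_restrict_mem measurableSet_Ici] with u hu
  rw [Real.norm_of_nonneg (hF0 u)]
  exact hF u hu

theorem integral_Ici_le_of_le_exp (hF0 : ∀ u, 0 ≤ F u) (hFm : Measurable F) (hω : ω < 0)
    (hF : ∀ u, 0 ≤ u → F u ≤ B * Real.exp (ω * u)) : ∫ u in Ici 0, F u ≤ B * (-ω)⁻¹ := by
  calc ∫ u in Ici 0, F u ≤ ∫ u in Ici 0, B * Real.exp (ω * u) :=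
        setIntegral_mono_on (integrableOn_Ici_of_le_exp hF0 hFm hω hF)
          ((integrableOn_Ici_exp_mul hω).const_mul B) measurableSet_Ici hF
    _ = B * (-ω)⁻¹ := by rw [integral_const_mul, integral_Ici_exp_mul hω]

theorem comp_le_geometric_of_le_exp (hF0 : ∀ u, 0 ≤ F u)
    (hF : ∀ u, 0 ≤ u → F u ≤ B * Real.exp (ω * u)) (hω : ω < 0) {t : ℕ → ℝ} {δ₀ : ℝ}
    (hδ₀ : 0 < δ₀) (ht : ∀ j : ℕ, j * δ₀ ≤ t j) (j : ℕ) :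
    F (t j) ≤ B * Real.exp (ω * δ₀) ^ j := by
  have hB : 0 ≤ B := by simpa using (hF0 0).trans (hF 0 le_rfl)
  refine (hF _ ((by positivity : (0 : ℝ) ≤ j * δ₀).trans (ht j))).trans ?_
  rw [← Real.exp_nat_mul]
  exact mul_le_mul_of_nonneg_left (Real.exp_le_exp.2 (by nlinarith [ht j])) hB

theorem summable_comp_of_le_exp (hF0 : ∀ u, 0 ≤ F u) (hω : ω < 0)
    (hF : ∀ u, 0 ≤ u → F u ≤ B * Real.exp (ω * u)) {t : ℕ → ℝ} {δ₀ : ℝ} (hδ₀ : 0 < δ₀)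
    (ht : ∀ j : ℕ, j * δ₀ ≤ t j) : Summable fun j => F (t j) :=
  ((summable_geometric_of_lt_one (Real.exp_nonneg _)
    (Real.exp_lt_one_iff.2 (mul_neg_of_neg_of_pos hω hδ₀))).mul_left B).of_nonneg_of_le
    (fun _ => hF0 _) (comp_le_geometric_of_le_exp hF0 hF hω hδ₀ ht)

theorem tsum_comp_le_of_le_exp (hF0 : ∀ u, 0 ≤ F u) (hω : ω < 0)
    (hF : ∀ u, 0 ≤ u → F u ≤ B * Real.exp (ω * u)) {t : ℕ → ℝ} {δ₀ : ℝ} (hδ₀ : 0 < δ₀)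
    (ht : ∀ j : ℕ, j * δ₀ ≤ t j) : ∑' j, F (t j) ≤ B * (1 - Real.exp (ω * δ₀))⁻¹ := by
  have hr : Real.exp (ω * δ₀) < 1 := Real.exp_lt_one_iff.2 (mul_neg_of_neg_of_pos hω hδ₀)
  calc ∑' j, F (t j) ≤ ∑' j : ℕ, B * Real.exp (ω * δ₀) ^ j :=
        (summable_comp_of_le_exp hF0 hω hF hδ₀ ht).tsum_le_tsum
          (comp_le_geometric_of_le_exp hF0 hF hω hδ₀ ht)
          ((summable_geometric_of_lt_one (Real.exp_nonneg _) hr).mul_left B)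
    _ = B * (1 - Real.exp (ω * δ₀))⁻¹ := by
        rw [tsum_mul_left, tsum_geometric_of_lt_one (Real.exp_nonneg _) hr]

theorem setIntegral_Ico_le_of_le {a b c : ℝ} {φ : ℝ → ℝ} (hab : a ≤ b)
    (hF : IntegrableOn F (Ico a b)) (hφ : IntegrableOn φ (Ico a b))
    (h : ∀ u ∈ Ico a b, F u ≤ c + φ u) :
    ∫ u in Ico a b, F u ≤ (b - a) * c + ∫ u in Ico a b, φ u := by
  have hc : IntegrableOn (fun _ => c) (Ico a b) := integrableOn_const (by simp)
  calc ∫ u in Ico a b, F u ≤ ∫ u in Ico a b, (c + φ u) :=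
        setIntegral_mono_on hF (hc.add hφ) measurableSet_Ico h
    _ = (b - a) * c + ∫ u in Ico a b, φ u := by
        rw [integral_add hc hφ, setIntegral_const, Real.volume_real_Ico_of_le hab, smul_eq_mul]

theorem mul_le_setIntegral_Ico_of_le {a b c d : ℝ} {φ : ℝ → ℝ} (hab : a ≤ b)
    (hφ : IntegrableOn φ (Ico a b)) (h : ∀ u ∈ Ico a b, c ≤ φ u + d) :
    (b - a) * c ≤ (∫ u in Ico a b, φ u) + (b - a) * d := by
  have hd : IntegrableOn (fun _ => d) (Ico a b) := integrableOn_const (by simp)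
  have hc : IntegrableOn (fun _ => c) (Ico a b) := integrableOn_const (by simp)
  calc (b - a) * c = ∫ _ in Ico a b, c := by
        rw [setIntegral_const, Real.volume_real_Ico_of_le hab, smul_eq_mul]
    _ ≤ ∫ u in Ico a b, (φ u + d) := setIntegral_mono_on hc (hφ.add hd) measurableSet_Ico h
    _ = (∫ u in Ico a b, φ u) + (b - a) * d := by
        rw [integral_add hφ hd, setIntegral_const, Real.volume_real_Ico_of_le hab, smul_eq_mul]

theorem integral_Ici_le_tsum (hF0 : ∀ u, 0 ≤ F u) (hFm : Measurable F) (hω : ω < 0)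
    (hF : ∀ u, 0 ≤ u → F u ≤ B * Real.exp (ω * u)) {t : ℕ → ℝ} {δ₀ : ℝ} (hδ₀ : 0 < δ₀)
    (h0 : t 0 = 0) (hmono : Monotone t) (ht : ∀ j : ℕ, j * δ₀ ≤ t j)
    (hgap : ∀ j, t (j + 1) - t j ≤ δ)
    (hcomp : ∀ s u, 0 ≤ s → s ≤ u → u ≤ s + δ → F u ≤ 2 * F s + D * Real.exp (ω * u)) :
    ∫ u in Ici 0, F u ≤ 2 * δ * ∑' j, F (t j) + D * (-ω)⁻¹ := by
  have hunb : ¬BddAbove (range t) := by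
    rintro ⟨b, hb⟩
    obtain ⟨j, hj⟩ := exists_nat_gt (b / δ₀)
    rw [div_lt_iff₀ hδ₀] at hj
    linarith [hb ⟨j, rfl⟩, ht j]
  have hcover : ⋃ j, Ico (t j) (t (j + 1)) = Ici 0 := by
    simpa [h0] using iUnion_Ico_map_succ_eq_Ici (fun j => hmono (Nat.zero_le j)) hunb
  have hdisj : Pairwise (Function.onFun Disjoint fun j => Ico (t j) (t (j + 1))) := by
    simpa using hmono.pairwise_disjoint_on_Ico_succ
  have hFint := integrableOn_Ici_of_le_exp hF0 hFm hω hF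
  have hexp := integrableOn_Ici_exp_mul hω
  have hsumF := hasSum_integral_iUnion (fun j => measurableSet_Ico) hdisj (hcover ▸ hFint)
  have hsumexp := hasSum_integral_iUnion (fun j => measurableSet_Ico) hdisj (hcover ▸ hexp)
  rw [hcover] at hsumF hsumexp
  rw [integral_Ici_exp_mul hω] at hsumexp
  have hpiece : ∀ j, ∫ u in Ico (t j) (t (j + 1)), F u
      ≤ 2 * δ * F (t j) + D * ∫ u in Ico (t j) (t (j + 1)), Real.exp (ω * u) := by
    intro j
    have htj : 0 ≤ t j := h0 ▸ hmono (Nat.zero_le j)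
    have hsub : Ico (t j) (t (j + 1)) ⊆ Ici 0 := fun u hu => htj.trans hu.1
    calc ∫ u in Ico (t j) (t (j + 1)), F u
        ≤ (t (j + 1) - t j) * (2 * F (t j)) + ∫ u in Ico (t j) (t (j + 1)), D * Real.exp (ω * u) :=
          setIntegral_Ico_le_of_le (hmono j.le_succ) (hFint.mono_set hsub)
            ((hexp.mono_set hsub).const_mul D)
            fun u hu => hcomp _ _ htj hu.1 (by linarith [hu.2, hgap j])
      _ ≤ 2 * δ * F (t j) + D * ∫ u in Ico (t j) (t (j + 1)), Real.exp (ω * u) := by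
          rw [integral_const_mul]
          nlinarith [hgap j, hF0 (t j)]
  have hsum := summable_comp_of_le_exp hF0 hω hF hδ₀ ht
  exact hasSum_le hpiece hsumF ((hsum.hasSum.mul_left (2 * δ)).add (hsumexp.mul_left D))

theorem tsum_le_integral_Ici (hF0 : ∀ u, 0 ≤ F u) (hFm : Measurable F) (hω : ω < 0)
    (hF : ∀ u, 0 ≤ u → F u ≤ B * Real.exp (ω * u)) {m : ℝ} (hδ : 0 < δ) (hδm : δ ≤ m)
    (hcomp : ∀ s u, 0 ≤ s → s ≤ u → u ≤ s + δ → F s ≤ 2 * F u + D * Real.exp (ω * s)) :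
    δ * ∑' j : ℕ, F (j * m) ≤ 2 * (∫ u in Ici 0, F u) + δ * D * (1 - Real.exp (ω * m))⁻¹ := by
  have hm : 0 < m := hδ.trans_le hδm
  set I : ℕ → Set ℝ := fun j => Ico (j * m) (j * m + δ)
  have hjm : ∀ j : ℕ, 0 ≤ (j : ℝ) * m := fun j => by positivity
  have hsub : ⋃ j, I j ⊆ Ici 0 := iUnion_subset fun j u hu => (hjm j).trans hu.1
  have hdisj : Pairwise (Function.onFun Disjoint I) := by
    intro i j hij
    wlog h : i < j generalizing i j
    · exact (this hij.symm (hij.symm.lt_of_le (not_lt.1 h))).symm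
    refine disjoint_left.2 fun u hi hj => ?_
    have hij' : ((i : ℝ) + 1) * m ≤ j * m := by gcongr; exact_mod_cast h
    simp only [I, mem_Ico] at hi hj
    nlinarith
  have hFint := integrableOn_Ici_of_le_exp hF0 hFm hω hF
  have hsumI := hasSum_integral_iUnion (fun j => measurableSet_Ico) hdisj (hFint.mono_set hsub)
  have hr : Real.exp (ω * m) < 1 := Real.exp_lt_one_iff.2 (mul_neg_of_neg_of_pos hω hm)
  have hgeom := hasSum_geometric_of_lt_one (Real.exp_nonneg _) hr
  have hpiece : ∀ j : ℕ, δ * F (j * m)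
      ≤ 2 * (∫ u in I j, F u) + δ * D * Real.exp (ω * m) ^ j := by
    intro j
    have h := mul_le_setIntegral_Ico_of_le (le_add_of_nonneg_right hδ.le)
      ((hFint.mono_set (subset_iUnion_of_subset j subset_rfl |>.trans hsub)).const_mul 2)
      fun u hu => hcomp _ u (hjm j) hu.1 hu.2.le
    rw [add_sub_cancel_left, integral_const_mul] at h
    rw [← Real.exp_nat_mul, show (j : ℝ) * (ω * m) = ω * (j * m) by ring]
    linarith
  have hsum := summable_comp_of_le_exp hF0 hω hF hm fun _ => le_rfl
  calc δ * ∑' j : ℕ, F (j * m)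
      ≤ 2 * (∫ u in ⋃ j, I j, F u) + δ * D * (1 - Real.exp (ω * m))⁻¹ :=
        hasSum_le hpiece (hsum.hasSum.mul_left δ) ((hsumI.mul_left 2).add (hgeom.mul_left (δ * D)))
    _ ≤ 2 * (∫ u in Ici 0, F u) + δ * D * (1 - Real.exp (ω * m))⁻¹ := by
        linarith [setIntegral_mono_set hFint (ae_of_all _ hF0) hsub.eventuallyLE]

end Sampling

section Semigroup

variable {H : Type*} [NormedAddCommGroup H] [InnerProductSpace ℂ H] [CompleteSpace H]
  {A : H →L[ℂ] H} {M ω : ℝ}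

theorem expT_zero (A : H →L[ℂ] H) : expT A 0 = 1 := by
  simp [expT]

theorem expT_add (A : H →L[ℂ] H) (s t : ℝ) : expT A (s + t) = expT A s * expT A t := by
  -- the `exp` API wants a `ℚ`-normed algebra; restrict scalars from `ℂ`
  let +nondep : NormedAlgebra ℚ (H →L[ℂ] H) := .restrictScalars ℚ ℂ _
  rw [expT, expT, expT, Complex.ofReal_add, add_smul]
  exact NormedSpace.exp_add_of_commute (((Commute.refl A).smul_left _).smul_right _)

theorem continuous_expT (A : H →L[ℂ] H) : Continuous (expT A) := by
  let +nondep : NormedAlgebra ℚ (H →L[ℂ] H) := .restrictScalars ℚ ℂ _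
  exact NormedSpace.exp_continuous.comp (Complex.continuous_ofReal.smul continuous_const)

theorem sq_norm_expT_le (hst : ∀ t, 0 ≤ t → ‖expT A t‖ ≤ M * Real.exp (ω * t)) {u : ℝ}
    (hu : 0 ≤ u) : ‖expT A u‖ ^ 2 ≤ M ^ 2 * Real.exp (2 * ω * u) := by
  calc ‖expT A u‖ ^ 2 ≤ (M * Real.exp (ω * u)) ^ 2 := by gcongr; exact hst u hu
    _ = M ^ 2 * Real.exp (2 * ω * u) := by rw [mul_pow, ← Real.exp_nat_mul]; ring_nf

theorem exists_norm_expT_sub_le (hst : ∀ t, 0 ≤ t → ‖expT A t‖ ≤ M * Real.exp (ω * t))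
    (hM : 0 < M) (hω : ω < 0) {ε : ℝ} (hε : 0 < ε) :
    ∃ δ > 0, ∀ s u, 0 ≤ s → s ≤ u → u ≤ s + δ →
      ‖expT A u - expT A s‖ ≤ ε * Real.exp (ω * u) := by
  set κ := ε / (M * Real.exp (-ω))
  obtain ⟨δ, hδ, hnear⟩ :=
    Metric.continuousAt_iff.1 (continuous_expT A).continuousAt κ (by positivity)
  refine ⟨min (δ / 2) 1, by positivity, fun s u hs hsu hus => ?_⟩
  have hh : u - s ≤ min (δ / 2) 1 := by linarith
  have hsmall : ‖expT A (u - s) - 1‖ ≤ κ := by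
    have := @hnear (u - s) (by
      rw [Real.dist_eq, sub_zero, abs_of_nonneg (sub_nonneg.2 hsu)]
      linarith [min_le_left (δ / 2) 1])
    rw [dist_eq_norm, expT_zero] at this
    exact this.le
  have hsplit : expT A u - expT A s = expT A s * (expT A (u - s) - 1) := by
    rw [mul_sub, mul_one, ← expT_add, add_sub_cancel]
  have hexp : Real.exp (ω * s) ≤ Real.exp (-ω) * Real.exp (ω * u) := by
    rw [← Real.exp_add]
    exact Real.exp_le_exp.2 (by nlinarith [min_le_right (δ / 2) 1])
  calc ‖expT A u - expT A s‖ ≤ ‖expT A s‖ * ‖expT A (u - s) - 1‖ := by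
        rw [hsplit]; exact norm_mul_le _ _
    _ ≤ M * (Real.exp (-ω) * Real.exp (ω * u)) * κ := by
        gcongr
        exact (hst s hs).trans (by gcongr)
    _ = ε * Real.exp (ω * u) := by
        simp only [κ]
        field_simp

end Semigroup

section Bessel

variable {H : Type*} [NormedAddCommGroup H] [InnerProductSpace ℂ H]

/-- `IsBesselSet` bounds a `tsum`, which is `0` for a non-summable family; this is the honest
Bessel bound. -/
def HasBesselBound (G : Set H) (K : ℝ) : Prop :=
  ∀ f : H, Summable (fun g : G => ‖⟪f, (g : H)⟫‖ ^ 2) ∧ ∑' g : G, ‖⟪f, (g : H)⟫‖ ^ 2 ≤ K * ‖f‖ ^ 2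

namespace HasBesselBound

variable {G : Set H} {K : ℝ}

theorem of_forall_mem_closure (hK : ∀ f : H, ∑' g : G, ‖⟪f, (g : H)⟫‖ ^ 2 ≤ K * ‖f‖ ^ 2)
    (hdense : ∀ f : H, f ∈ closure {f : H | Summable fun g : G => ‖⟪f, (g : H)⟫‖ ^ 2}) :
    HasBesselBound G K := by
  intro f
  have hfin : ∀ s : Finset G, ∑ g ∈ s, ‖⟪f, (g : H)⟫‖ ^ 2 ≤ K * ‖f‖ ^ 2 := by
    intro s
    have hclosed : IsClosed {f : H | ∑ g ∈ s, ‖⟪f, (g : H)⟫‖ ^ 2 ≤ K * ‖f‖ ^ 2} :=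
      isClosed_le (by fun_prop) (by fun_prop)
    refine closure_minimal (fun y hy => ?_) hclosed (hdense f)
    exact (hy.sum_le_tsum s fun _ _ => by positivity).trans (hK y)
  exact ⟨summable_of_sum_le (fun _ => by positivity) hfin,
    Real.tsum_le_of_sum_le (fun _ => by positivity) hfin⟩

variable [CompleteSpace H]

theorem summable_inner_apply (hB : HasBesselBound G K) (B : H →L[ℂ] H) (f : H) :
    Summable fun g : G => ‖⟪f, B g⟫‖ ^ 2 := by
  simpa only [ContinuousLinearMap.adjoint_inner_left] using (hB ((B†) f)).1

theorem tsum_inner_apply_le (hB : HasBesselBound G K) (hK : 0 ≤ K) (B : H →L[ℂ] H) (f : H) :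
    ∑' g : G, ‖⟪f, B g⟫‖ ^ 2 ≤ K * (‖B‖ * ‖f‖) ^ 2 := by
  simp_rw [← ContinuousLinearMap.adjoint_inner_left]
  refine (hB _).2.trans (mul_le_mul_of_nonneg_left ?_ hK)
  gcongr
  simpa using (B†).le_opNorm f

theorem tsum_inner_apply_le_two_mul (hB : HasBesselBound G K) (hK : 0 ≤ K)
    (B B' : H →L[ℂ] H) (f : H) :
    ∑' g : G, ‖⟪f, B g⟫‖ ^ 2
      ≤ 2 * ∑' g : G, ‖⟪f, B' g⟫‖ ^ 2 + 2 * K * (‖B - B'‖ * ‖f‖) ^ 2 := by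
  have hle : ∀ g : G,
      ‖⟪f, B g⟫‖ ^ 2 ≤ 2 * ‖⟪f, B' g⟫‖ ^ 2 + 2 * ‖⟪f, (B - B') g⟫‖ ^ 2 := fun g => by
    have hsplit : ⟪f, B g⟫ = ⟪f, B' g⟫ + ⟪f, (B - B') g⟫ := by
      rw [sub_apply, inner_sub_right, add_sub_cancel]
    calc ‖⟪f, B g⟫‖ ^ 2 ≤ (‖⟪f, B' g⟫‖ + ‖⟪f, (B - B') g⟫‖) ^ 2 := by
          rw [hsplit]; gcongr; exact norm_add_le _ _
      _ ≤ _ := by linarith [add_sq_le (a := ‖⟪f, B' g⟫‖) (b := ‖⟪f, (B - B') g⟫‖)]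
  have hs' := (hB.summable_inner_apply B' f).mul_left 2
  have hs'' := (hB.summable_inner_apply (B - B') f).mul_left 2
  calc ∑' g : G, ‖⟪f, B g⟫‖ ^ 2
      ≤ ∑' g : G, (2 * ‖⟪f, B' g⟫‖ ^ 2 + 2 * ‖⟪f, (B - B') g⟫‖ ^ 2) :=
        (hB.summable_inner_apply B f).tsum_le_tsum hle (hs'.add hs'')
    _ ≤ 2 * ∑' g : G, ‖⟪f, B' g⟫‖ ^ 2 + 2 * K * (‖B - B'‖ * ‖f‖) ^ 2 := by
        rw [hs'.tsum_add hs'', tsum_mul_left, tsum_mul_left]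
        linarith [hB.tsum_inner_apply_le hK (B - B') f]

end HasBesselBound

end Bessel

section Frame

variable {H : Type*} [NormedAddCommGroup H] [InnerProductSpace ℂ H] [CompleteSpace H]
  {A : H →L[ℂ] H} {G : Set H} {K M ω : ℝ}

def frameFun (A : H →L[ℂ] H) (G : Set H) (f : H) (u : ℝ) : ℝ :=
  ∑' g : G, ‖⟪f, expT A u g⟫‖ ^ 2

theorem frameFun_nonneg (f : H) (u : ℝ) : 0 ≤ frameFun A G f u :=
  tsum_nonneg fun _ => by positivity

theorem continuous_sq_norm_inner_expT (A : H →L[ℂ] H) (f g : H) :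
    Continuous fun u => ‖⟪f, expT A u g⟫‖ ^ 2 := by
  have := (continuous_expT A).clm_apply (continuous_const (y := g))
  fun_prop

theorem measurable_frameFun [Countable G] (f : H) : Measurable (frameFun A G f) :=
  Measurable.tsum fun g => (continuous_sq_norm_inner_expT A f g).measurable

theorem sq_norm_inner_expT_le (hst : ∀ t, 0 ≤ t → ‖expT A t‖ ≤ M * Real.exp (ω * t))
    (f g : H) {u : ℝ} (hu : 0 ≤ u) :
    ‖⟪f, expT A u g⟫‖ ^ 2 ≤ ‖f‖ ^ 2 * ‖g‖ ^ 2 * M ^ 2 * Real.exp (2 * ω * u) := by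
  calc ‖⟪f, expT A u g⟫‖ ^ 2 ≤ (‖f‖ * (‖expT A u‖ * ‖g‖)) ^ 2 := by
        gcongr
        exact (norm_inner_le_norm _ _).trans (by gcongr; exact (expT A u).le_opNorm g)
    _ = ‖f‖ ^ 2 * ‖g‖ ^ 2 * ‖expT A u‖ ^ 2 := by ring
    _ ≤ ‖f‖ ^ 2 * ‖g‖ ^ 2 * (M ^ 2 * Real.exp (2 * ω * u)) := by
        gcongr; exact sq_norm_expT_le hst hu
    _ = _ := by ring

theorem frameFun_le (hB : HasBesselBound G K) (hK : 0 ≤ K)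
    (hst : ∀ t, 0 ≤ t → ‖expT A t‖ ≤ M * Real.exp (ω * t)) (f : H) {u : ℝ} (hu : 0 ≤ u) :
    frameFun A G f u ≤ K * M ^ 2 * ‖f‖ ^ 2 * Real.exp (2 * ω * u) := by
  calc frameFun A G f u ≤ K * (‖expT A u‖ * ‖f‖) ^ 2 := hB.tsum_inner_apply_le hK _ f
    _ = K * ‖f‖ ^ 2 * ‖expT A u‖ ^ 2 := by ring
    _ ≤ K * ‖f‖ ^ 2 * (M ^ 2 * Real.exp (2 * ω * u)) := by gcongr; exact sq_norm_expT_le hst hu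
    _ = _ := by ring

theorem exists_frameFun_le_two_mul (hB : HasBesselBound G K) (hK : 0 < K)
    (hst : ∀ t, 0 ≤ t → ‖expT A t‖ ≤ M * Real.exp (ω * t)) (hM : 0 < M) (hω : ω < 0)
    {ε : ℝ} (hε : 0 < ε) :
    ∃ δ > 0, ∀ f : H, ∀ s u, 0 ≤ s → s ≤ u → u ≤ s + δ →
      frameFun A G f u ≤ 2 * frameFun A G f s + ε * ‖f‖ ^ 2 * Real.exp (2 * ω * u) ∧
      frameFun A G f s ≤ 2 * frameFun A G f u + ε * ‖f‖ ^ 2 * Real.exp (2 * ω * s) := by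
  obtain ⟨δ, hδ, hnear⟩ :=
    exists_norm_expT_sub_le hst hM hω (Real.sqrt_pos.2 (div_pos hε (mul_pos two_pos hK)))
  refine ⟨δ, hδ, fun f s u hs hsu hus => ?_⟩
  have hdiff : 2 * K * (‖expT A u - expT A s‖ * ‖f‖) ^ 2
      ≤ ε * ‖f‖ ^ 2 * Real.exp (2 * ω * u) := by
    calc 2 * K * (‖expT A u - expT A s‖ * ‖f‖) ^ 2
        ≤ 2 * K * ((Real.sqrt (ε / (2 * K)) * Real.exp (ω * u)) * ‖f‖) ^ 2 := by
          gcongr; exact hnear s u hs hsu hus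
      _ = ε * ‖f‖ ^ 2 * Real.exp (2 * ω * u) := by
          rw [mul_pow, mul_pow, Real.sq_sqrt (by positivity), ← Real.exp_nat_mul]
          field_simp
          ring_nf
  have hexp : Real.exp (2 * ω * u) ≤ Real.exp (2 * ω * s) :=
    Real.exp_le_exp.2 (by nlinarith)
  simp only [frameFun]
  constructor
  · linarith [hB.tsum_inner_apply_le_two_mul hK.le (expT A u) (expT A s) f]
  · have := hB.tsum_inner_apply_le_two_mul hK.le (expT A s) (expT A u) f
    rw [norm_sub_rev] at this
    have : ε * ‖f‖ ^ 2 * Real.exp (2 * ω * u) ≤ ε * ‖f‖ ^ 2 * Real.exp (2 * ω * s) := by gcongr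
    linarith

theorem integrableOn_sq_norm_inner_expT (hst : ∀ t, 0 ≤ t → ‖expT A t‖ ≤ M * Real.exp (ω * t))
    (hω : ω < 0) (f g : H) : IntegrableOn (fun u => ‖⟪f, expT A u g⟫‖ ^ 2) (Ici 0) :=
  integrableOn_Ici_of_le_exp (fun _ => by positivity)
    (continuous_sq_norm_inner_expT A f g).measurable (by linarith)
    fun _ hu => sq_norm_inner_expT_le hst f g hu

theorem tsum_integral_eq_integral_frameFun [Countable G] (hB : HasBesselBound G K) (hK : 0 ≤ K)
    (hst : ∀ t, 0 ≤ t → ‖expT A t‖ ≤ M * Real.exp (ω * t)) (hω : ω < 0) (f : H) :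
    ∑' g : G, ∫ u in Ici 0, ‖⟪f, expT A u g⟫‖ ^ 2 = ∫ u in Ici 0, frameFun A G f u := by
  have hint := fun g : G => integrableOn_sq_norm_inner_expT hst hω f g
  have hFint : IntegrableOn (frameFun A G f) (Ici 0) :=
    integrableOn_Ici_of_le_exp (frameFun_nonneg f) (measurable_frameFun f) (by linarith)
      fun _ hu => frameFun_le hB hK hst f hu
  refine integral_tsum_of_summable_integral_norm hint ?_
  simp_rw [Real.norm_of_nonneg (sq_nonneg _)]
  refine summable_of_sum_le (c := ∫ u in Ici 0, frameFun A G f u)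
    (fun g => setIntegral_nonneg measurableSet_Ici fun _ _ => by positivity)
    fun s => ?_
  rw [← integral_finsetSum s fun g _ => hint g]
  refine setIntegral_mono_on (integrable_finsetSum s fun g _ => hint g) hFint measurableSet_Ici
    fun u _ => ?_
  exact (hB.summable_inner_apply (expT A u) f).sum_le_tsum s fun _ _ => by positivity

theorem tsum_tsum_eq_tsum_frameFun (hB : HasBesselBound G K) (f : H) {t : ℕ → ℝ}
    (ht : Summable fun j => frameFun A G f (t j)) :
    ∑' g : G, ∑' j, ‖⟪f, expT A (t j) g⟫‖ ^ 2 = ∑' j, frameFun A G f (t j) := by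
  have hprod : Summable (Function.uncurry fun j (g : G) => ‖⟪f, expT A (t j) g⟫‖ ^ 2) :=
    (summable_prod_of_nonneg fun _ => sq_nonneg _).2
      ⟨fun j => hB.summable_inner_apply (expT A (t j)) f, ht⟩
  exact hprod.tsum_comm

theorem HasBesselBound.of_semiContFrame [Countable G]
    (hK : ∀ f : H, ∑' g : G, ‖⟪f, (g : H)⟫‖ ^ 2 ≤ K * ‖f‖ ^ 2)
    (hst : ∀ t, 0 ≤ t → ‖expT A t‖ ≤ M * Real.exp (ω * t)) (hω : ω < 0)
    (h : SemiContFrame A G (Ici 0)) : HasBesselBound G K := by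
  obtain ⟨c, hc, _, _, hfr⟩ := h
  refine of_forall_mem_closure hK fun f => ?_
  rcases eq_or_ne f 0 with rfl | hf
  · exact subset_closure (by simp)
  have hsum : Summable fun g : G => ∫ u in Ici 0, ‖⟪f, expT A u g⟫‖ ^ 2 :=
    summable_of_tsum_ne_zero ((by positivity : 0 < c * ‖f‖ ^ 2).trans_le (hfr f).1).ne'
  have hae := ae_summable_of_summable_integral (a := fun (g : G) u => ‖⟪f, expT A u g⟫‖ ^ 2)
    (fun _ _ => sq_nonneg _)
    (fun g => integrableOn_sq_norm_inner_expT hst hω f g) hsum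
  have hcont : Continuous fun u => ((expT A u)†) f :=
    ((ContinuousLinearMap.adjoint.continuous.comp (continuous_expT A)).clm_apply continuous_const)
  refine mem_closure_of_frequently_of_tendsto (f := fun u => ((expT A u)†) f)
    (frequently_nhdsGT_zero_of_ae_restrict_Ici
    (hae.mono fun u hu => ?_)) ?_
  · simpa only [mem_ofPred_eq, ContinuousLinearMap.adjoint_inner_left] using hu
  · simpa [expT_zero, ContinuousLinearMap.adjoint_one] using
      (hcont.tendsto 0).mono_left (nhdsWithin_le_nhds (s := Ioi 0))

theorem HasBesselBound.of_natTimeFrame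
    (hst : ∀ t, 0 ≤ t → ‖expT A t‖ ≤ M * Real.exp (ω * t)) (hω : ω < 0) {m : ℝ} (hm : 0 < m)
    (h : NatTimeFrame A G fun j : ℕ => (j : ℝ) * m) : ∃ K > 0, HasBesselBound G K := by
  obtain ⟨c, hc, C, hC, hfr⟩ := h
  refine ⟨C, hC, fun f => ?_⟩
  rcases eq_or_ne f 0 with rfl | hf
  · simp
  have hin : ∀ g : G, Summable fun j : ℕ => ‖⟪f, expT A (j * m) g⟫‖ ^ 2 := fun g =>
    summable_comp_of_le_exp (fun _ => sq_nonneg _) (by linarith)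
      (fun _ hu => sq_norm_inner_expT_le hst f g hu) hm fun _ => le_rfl
  have hout : Summable fun g : G => ∑' j : ℕ, ‖⟪f, expT A (j * m) g⟫‖ ^ 2 :=
    summable_of_tsum_ne_zero ((by positivity : 0 < c * ‖f‖ ^ 2).trans_le (hfr f).1).ne'
  have hle : ∀ g : G, ‖⟪f, (g : H)⟫‖ ^ 2 ≤ ∑' j : ℕ, ‖⟪f, expT A (j * m) g⟫‖ ^ 2 := fun g => by
    simpa [expT_zero] using (hin g).le_tsum 0 fun _ _ => sq_nonneg _
  have hsum : Summable fun g : G => ‖⟪f, (g : H)⟫‖ ^ 2 :=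
    hout.of_nonneg_of_le (fun _ => sq_nonneg _) hle
  exact ⟨hsum, (hsum.tsum_le_tsum hle hout).trans (hfr f).2⟩

theorem exists_natTimeFrame_of_semiContFrame [Countable G] (hB : HasBesselBound G K)
    (hK : 0 < K) (hst : ∀ t, 0 ≤ t → ‖expT A t‖ ≤ M * Real.exp (ω * t)) (hM : 0 < M)
    (hω : ω < 0) (h : SemiContFrame A G (Ici 0)) :
    ∃ δ > (0 : ℝ), ∀ t : ℕ → ℝ, t 0 = 0 → StrictMono t →
      (∃ δ₀ > (0 : ℝ), ∀ j : ℕ, δ₀ ≤ t (j + 1) - t j) →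
      (∀ j : ℕ, t (j + 1) - t j < δ) → NatTimeFrame A G t := by
  obtain ⟨c, hc, _, _, hfr⟩ := h
  obtain ⟨δ, hδ, hcomp⟩ :=
    exists_frameFun_le_two_mul hB hK hst hM hω (mul_pos hc (neg_pos.2 hω))
  refine ⟨δ, hδ, fun t h0 hmono ⟨δ₀, hδ₀, hgap⟩ hlt => ?_⟩
  have ht : ∀ j : ℕ, j * δ₀ ≤ t j := by
    intro j
    induction j with
    | zero => simp [h0]
    | succ j ih => push_cast; linarith [hgap j]
  have h2ω : 2 * ω < 0 := by linarith
  have hdecay := fun f u (hu : 0 ≤ u) => frameFun_le (A := A) hB hK.le hst f hu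
  refine ⟨c / (4 * δ), by positivity, K * M ^ 2 * (1 - Real.exp (2 * ω * δ₀))⁻¹, ?_, fun f => ?_⟩
  · have : Real.exp (2 * ω * δ₀) < 1 := Real.exp_lt_one_iff.2 (mul_neg_of_neg_of_pos h2ω hδ₀)
    have : 0 < 1 - Real.exp (2 * ω * δ₀) := by linarith
    positivity
  rw [tsum_tsum_eq_tsum_frameFun hB f
    (summable_comp_of_le_exp (frameFun_nonneg f) h2ω (hdecay f) hδ₀ ht)]
  refine ⟨?_, (tsum_comp_le_of_le_exp (frameFun_nonneg f) h2ω (hdecay f) hδ₀ ht).trans_eq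
    (by ring)⟩
  have hlower := (hfr f).1
  rw [tsum_integral_eq_integral_frameFun hB hK.le hst hω f] at hlower
  have hsample := integral_Ici_le_tsum (frameFun_nonneg f) (measurable_frameFun f) h2ω
    (hdecay f) hδ₀ h0 hmono.monotone ht (fun j => (hlt j).le)
    fun s u hs hsu hus => (hcomp f s u hs hsu hus).1
  have hc2 : c * -ω * ‖f‖ ^ 2 * (-(2 * ω))⁻¹ = c / 2 * ‖f‖ ^ 2 := by
    field_simp [hω.ne]
  rw [div_mul_eq_mul_div, div_le_iff₀ (by positivity)]
  nlinarith

theorem semiContFrame_of_natTimeFrame [Countable G] (hB : HasBesselBound G K) (hK : 0 < K)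
    (hst : ∀ t, 0 ≤ t → ‖expT A t‖ ≤ M * Real.exp (ω * t)) (hM : 0 < M) (hω : ω < 0)
    {m : ℝ} (hm : 0 < m) (h : NatTimeFrame A G fun j : ℕ => (j : ℝ) * m) :
    SemiContFrame A G (Ici 0) := by
  obtain ⟨c, hc, _, _, hfr⟩ := h
  have h2ω : 2 * ω < 0 := by linarith
  have hr : 0 < 1 - Real.exp (2 * ω * m) := by
    linarith [Real.exp_lt_one_iff.2 (mul_neg_of_neg_of_pos h2ω hm)]
  obtain ⟨δ, hδ, hcomp⟩ := exists_frameFun_le_two_mul hB hK hst hM hω (by positivity :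
    0 < c * (1 - Real.exp (2 * ω * m)) / 2)
  set δ' := min δ m
  have hδ' : 0 < δ' := lt_min hδ hm
  have hdecay := fun f u (hu : 0 ≤ u) => frameFun_le (A := A) hB hK.le hst f hu
  refine ⟨δ' * c / 4, by positivity, K * M ^ 2 * (-(2 * ω))⁻¹,
    mul_pos (by positivity) (inv_pos.2 (by linarith)), fun f => ?_⟩
  rw [tsum_integral_eq_integral_frameFun hB hK.le hst hω f]
  refine ⟨?_, (integral_Ici_le_of_le_exp (frameFun_nonneg f) (measurable_frameFun f) h2ω
    (hdecay f)).trans_eq (by ring)⟩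
  have hsum := summable_comp_of_le_exp (frameFun_nonneg f) h2ω (hdecay f) hm fun _ => le_rfl
  have hlower := (hfr f).1
  rw [tsum_tsum_eq_tsum_frameFun hB f hsum] at hlower
  have hsample := tsum_le_integral_Ici (frameFun_nonneg f) (measurable_frameFun f) h2ω
    (hdecay f) hδ' (min_le_right δ m) fun s u hs hsu hus =>
      (hcomp f s u hs hsu (hus.trans (by gcongr; exact min_le_left δ m))).2
  have hc2 : δ' * (c * (1 - Real.exp (2 * ω * m)) / 2 * ‖f‖ ^ 2)
      * (1 - Real.exp (2 * ω * m))⁻¹ = δ' * c / 2 * ‖f‖ ^ 2 := by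
    field_simp
  nlinarith [mul_le_mul_of_nonneg_left hlower hδ'.le]

end Frame

theorem stmt2_general
    {H : Type*} [NormedAddCommGroup H] [InnerProductSpace ℂ H] [CompleteSpace H]
    (A : H →L[ℂ] H) (G : Set H) (hGc : G.Countable) (hG : IsBesselSet G)
    (hstable : ExpStable A) :
    List.TFAE
      [ SemiContFrame A G (Set.Ici 0),
        ∃ δ > (0 : ℝ), ∀ t : ℕ → ℝ,
          t 0 = 0 → StrictMono t →
          (∃ δ₀ > (0 : ℝ), ∀ j : ℕ, δ₀ ≤ t (j + 1) - t j) →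
          (∀ j : ℕ, t (j + 1) - t j < δ) →
          NatTimeFrame A G t,
        ∃ m > (0 : ℝ), NatTimeFrame A G (fun j : ℕ => (j : ℝ) * m) ] := by
  have := hGc.to_subtype
  obtain ⟨M, hM, ω, hω, hst⟩ := hstable
  obtain ⟨K, hK, hKG⟩ := hG
  have hM0 : 0 < M := by linarith
  tfae_have 1 → 2 := fun h =>
    exists_natTimeFrame_of_semiContFrame (.of_semiContFrame hKG hst hω h) hK hst hM0 hω h
  tfae_have 2 → 3 := by
    rintro ⟨δ, hδ, h⟩
    have hgap : ∀ j : ℕ, ((j + 1 : ℕ) : ℝ) * (δ / 2) - j * (δ / 2) = δ / 2 := fun j => by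
      push_cast; ring
    refine ⟨δ / 2, by positivity, h _ (by simp) ?_ ⟨δ / 2, by positivity, fun j => ?_⟩
      fun j => ?_⟩
    · exact strictMono_nat_of_lt_succ fun j => by linarith [hgap j]
    · rw [hgap]
    · rw [hgap]; linarith
  tfae_have 3 → 1 := fun ⟨m, hm, h⟩ =>
    let ⟨_, hK', hB⟩ := HasBesselBound.of_natTimeFrame hst hω hm h
    semiContFrame_of_natTimeFrame hB hK' hst hM0 hω hm h
  tfae_finish

theorem stmt2
    {H : Type*} [NormedAddCommGroup H] [InnerProductSpace ℂ H] [CompleteSpace H]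
    [TopologicalSpace.SeparableSpace H]
    (A : H →L[ℂ] H) (G : Set H) (hGc : G.Countable) (hG : IsBesselSet G)
    (hstable : ExpStable A) :
    List.TFAE
      [ SemiContFrame A G (Set.Ici 0),
        ∃ δ > (0 : ℝ), ∀ t : ℕ → ℝ,
          t 0 = 0 → StrictMono t →
          (∃ δ₀ > (0 : ℝ), ∀ j : ℕ, δ₀ ≤ t (j + 1) - t j) →
          (∀ j : ℕ, t (j + 1) - t j < δ) →
          NatTimeFrame A G t,
        ∃ m > (0 : ℝ), NatTimeFrame A G (fun j : ℕ => (j : ℝ) * m) ] :=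
  stmt2_general A G hGc hG hstable

end
end

section
/- Let H be a complex separable Hilbert space and A ∈ B(H) an operator having an orthonormal basis {e_j}_{j∈J} of eigenvectors with A e_j = η_j e_j where |η_j| < 1 for all j. Let a ∈ H and suppose the orbit {Aⁿa}_{n∈ℕ∪{0}} is a Bessel system in H. Then for every c ∈ H, Σ_{n=0}^∞ |⟨Aⁿ a, c⟩|² = Σ_{j,k∈J} (conj(a_k) c_k a_j conj(c_j)) / (1 − η_j conj(η_k)), where a_j := ⟨a, e_j⟩, c_j := ⟨c, e_j⟩, and the right-hand side is a convergent double series (summed first over j, then over k). -/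
open MeasureTheory
open scoped ComplexInnerProductSpace

noncomputable section

variable {H : Type*} [NormedAddCommGroup H] [InnerProductSpace ℂ H] [CompleteSpace H]

/-!
Put `u n = ⟪Aⁿ a, c⟫`. The Bessel property makes `L f = ∑ n, conj (u n) * ⟪Aⁿ a, f⟫` a continuous
linear functional (a pointwise limit of its partial sums, so Banach–Steinhaus applies). Then
`L c = ∑ |u n|²`, while expanding `c` in the eigenbasis gives `L c = ∑ k, c_k * L e_k` with
`L e_k = conj a_k * ∑ n, conj (u n) * conj η_kⁿ`. By Parseval `conj (u n) = ∑ j, η_jⁿ a_j conj c_j`,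
and since this double series in `(j, n)` converges absolutely, summing the geometric series in `n`
first produces the kernel `1 / (1 - η_j conj η_k)`.
-/

open Filter Topology

theorem summable_norm_mul_norm_of_summable_sq {ι E F : Type*} [SeminormedAddCommGroup E]
    [SeminormedAddCommGroup F] {x : ι → E} {y : ι → F} (hx : Summable fun i => ‖x i‖ ^ 2)
    (hy : Summable fun i => ‖y i‖ ^ 2) : Summable fun i => ‖x i‖ * ‖y i‖ :=
  ((hx.add hy).div_const 2).of_nonneg_of_le (fun _ => by positivity) fun i => by
    rw [le_div_iff₀ two_pos]
    linarith [two_mul_le_add_sq ‖x i‖ ‖y i‖]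

theorem hasSum_div_one_sub_mul {J : Type*} {w η : J → ℂ} (hw : Summable fun j => ‖w j‖)
    (hη : ∀ j, ‖η j‖ ≤ 1) {z : ℂ} (hz : ‖z‖ < 1) :
    HasSum (fun j => w j / (1 - η j * z)) (∑' n : ℕ, (∑' j, η j ^ n * w j) * z ^ n) := by
  let F : J × ℕ → ℂ := fun p => w p.1 * (η p.1 * z) ^ p.2
  have hηz (j : J) : ‖η j * z‖ ≤ ‖z‖ := by
    rw [norm_mul]
    exact mul_le_of_le_one_left (norm_nonneg _) (hη j)
  have hF : Summable F := by
    refine Summable.of_norm_bounded (hw.mul_of_nonneg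
      (summable_geometric_of_lt_one (norm_nonneg _) hz) (fun _ => norm_nonneg _)
      (fun _ => by positivity)) fun p => ?_
    rw [norm_mul, norm_pow]
    gcongr
    exact hηz _
  have hrows (j : J) : HasSum (fun n => F (j, n)) (w j / (1 - η j * z)) := by
    simpa [div_eq_mul_inv] using
      (hasSum_geometric_of_norm_lt_one ((hηz j).trans_lt hz)).mul_left (w j)
  have hcols (n : ℕ) : HasSum (fun j => F (j, n)) ((∑' j, η j ^ n * w j) * z ^ n) := by
    have hsum : Summable fun j => η j ^ n * w j := hw.of_norm_bounded fun j => by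
      rw [norm_mul, norm_pow]
      exact mul_le_of_le_one_left (norm_nonneg _) (pow_le_one₀ (norm_nonneg _) (hη j))
    have hF_col : (fun j => F (j, n)) = fun j => η j ^ n * w j * z ^ n :=
      funext fun j => by simp only [F]; ring
    exact hF_col ▸ hsum.hasSum.mul_right (z ^ n)
  have hswap : HasSum (F ∘ Equiv.prodComm ℕ J) (∑' p, F p) :=
    (Equiv.prodComm ℕ J).hasSum_iff.mpr hF.hasSum
  rw [(hswap.prod_fiberwise hcols).tsum_eq]
  exact hF.hasSum.prod_fiberwise hrows

section

variable {E : Type*} [NormedAddCommGroup E] [InnerProductSpace ℂ E]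

theorem HilbertBasis.inner_apply_eq_mul_inner {J : Type*} (b : HilbertBasis J ℂ E)
    {A : E →L[ℂ] E} {η : J → ℂ} (heig : ∀ j, A (b j) = η j • b j) (k : J) (y : E) :
    ⟪b k, A y⟫ = η k * ⟪b k, y⟫ := by
  have hdense : Dense (Submodule.span ℂ (Set.range b) : Set E) :=
    Submodule.dense_iff_topologicalClosure_eq_top.mpr b.dense_span
  have : (innerSL ℂ (b k)).comp A = η k • innerSL ℂ (b k) := by
    refine ContinuousLinearMap.ext_on hdense ?_
    rintro _ ⟨j, rfl⟩
    rcases eq_or_ne j k with rfl | hjk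
    · simp [heig]
    · simp [heig, b.orthonormal.2 hjk.symm]
  simpa using congr($this y)

theorem inner_pow_apply_eq_pow_mul_inner {A : E →L[ℂ] E} {x : E} {μ : ℂ}
    (h : ∀ y, ⟪x, A y⟫ = μ * ⟪x, y⟫) (n : ℕ) (y : E) :
    ⟪x, (A ^ n) y⟫ = μ ^ n * ⟪x, y⟫ := by
  induction n with
  | zero => simp
  | succ n ih => rw [pow_succ', mul_apply_eq_comp, h, ih, pow_succ', mul_assoc]

theorem summable_sq_norm_inner_pow_apply_of_mem_span {J : Type*} {e : J → E}
    {A : E →L[ℂ] E} {η : J → ℂ} (hA : ∀ k y, ⟪e k, A y⟫ = η k * ⟪e k, y⟫)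
    (hη : ∀ j, ‖η j‖ < 1) (a : E) {g : E} (hg : g ∈ Submodule.span ℂ (Set.range e)) :
    Summable fun n => ‖⟪g, (A ^ n) a⟫‖ ^ 2 := by
  suffices Memℓp (fun n => ⟪g, (A ^ n) a⟫) 2 by
    simpa using (memℓp_gen_iff (p := 2) (by norm_num)).mp this
  induction hg using Submodule.span_induction with
  | mem x hx =>
    obtain ⟨j, rfl⟩ := hx
    refine (memℓp_gen_iff (p := 2) (by norm_num)).mpr ?_
    have hη2 : ‖η j‖ ^ 2 < 1 := pow_lt_one₀ (norm_nonneg _) (hη j) two_ne_zero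
    simpa only [inner_pow_apply_eq_pow_mul_inner (hA j), norm_mul, norm_pow, ENNReal.toReal_ofNat,
      Real.rpow_two, mul_pow, pow_right_comm _ _ 2] using
      (summable_geometric_of_lt_one (by positivity) hη2).mul_right (‖⟪e j, a⟫‖ ^ 2)
  | zero => simp only [inner_zero_left]; exact zero_memℓp
  | add x y _ _ hx hy => simp only [inner_add_left]; exact hx.add hy
  | smul c x _ hx => simp only [inner_smul_left]; exact hx.const_smul (starRingEnd ℂ c)

theorem summable_sq_norm_inner_of_dense {v : ℕ → E} {D : Set E} (hD : Dense D) {K : ℝ}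
    (hsum : ∀ g ∈ D, Summable fun n => ‖⟪g, v n⟫‖ ^ 2)
    (hle : ∀ g ∈ D, ∑' n, ‖⟪g, v n⟫‖ ^ 2 ≤ K * ‖g‖ ^ 2) (f : E) :
    Summable fun n => ‖⟪f, v n⟫‖ ^ 2 := by
  have hpartial (N : ℕ) : ∑ n ∈ Finset.range N, ‖⟪f, v n⟫‖ ^ 2 ≤ K * ‖f‖ ^ 2 := by
    let S := {g : E | ∑ n ∈ Finset.range N, ‖⟪g, v n⟫‖ ^ 2 ≤ K * ‖g‖ ^ 2}
    have hclosed : IsClosed S := isClosed_le (by fun_prop) (by fun_prop)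
    have hsub : D ⊆ S := fun g hg =>
      ((hsum g hg).sum_le_tsum _ fun n _ => by positivity).trans (hle g hg)
    exact closure_minimal hsub hclosed (hD.closure_eq.symm ▸ Set.mem_univ f)
  exact summable_of_sum_range_le (fun n => by positivity) hpartial

theorem exists_continuousLinearMap_hasSum_mul_inner [CompleteSpace E] {v : ℕ → E}
    (hv : ∀ f, Summable fun n => ‖⟪f, v n⟫‖ ^ 2) {x : ℕ → ℂ}
    (hx : Summable fun n => ‖x n‖ ^ 2) :
    ∃ L : E →L[ℂ] ℂ, ∀ f, HasSum (fun n => x n * ⟪v n, f⟫) (L f) := by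
  have hsum (f : E) : Summable fun n => x n * ⟪v n, f⟫ :=
    (summable_norm_mul_norm_of_summable_sq hx (hv f)).of_norm_bounded fun n => by
      rw [norm_mul, norm_inner_symm]
  let S : ℕ → E →L[ℂ] ℂ := fun N => ∑ n ∈ Finset.range N, x n • innerSL ℂ (v n)
  have hS : Tendsto (fun N f => S N f) atTop (𝓝 fun f => ∑' n, x n * ⟪v n, f⟫) :=
    tendsto_pi_nhds.mpr fun f => by simpa [S] using (hsum f).hasSum.tendsto_sum_nat
  exact ⟨continuousLinearMapOfTendsto S hS, fun f => (hsum f).hasSum⟩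

theorem HilbertBasis.hasSum_coeff_div_one_sub_mul_conj {J : Type*} (b : HilbertBasis J ℂ E)
    {A : E →L[ℂ] E} {η : J → ℂ} (hA : ∀ k y, ⟪b k, A y⟫ = η k * ⟪b k, y⟫)
    (hη : ∀ j, ‖η j‖ < 1) (a c : E) (k : J) :
    HasSum (fun j => starRingEnd ℂ ⟪b k, a⟫ * ⟪b k, c⟫ * ⟪b j, a⟫ * starRingEnd ℂ ⟪b j, c⟫ /
        (1 - η j * starRingEnd ℂ (η k)))
      (starRingEnd ℂ ⟪b k, a⟫ * ⟪b k, c⟫ *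
        ∑' n : ℕ, starRingEnd ℂ ⟪(A ^ n) a, c⟫ * starRingEnd ℂ (η k) ^ n) := by
  have hparseval (n : ℕ) : ∑' j, η j ^ n * (⟪b j, a⟫ * starRingEnd ℂ ⟪b j, c⟫) =
      starRingEnd ℂ ⟪(A ^ n) a, c⟫ := by
    rw [inner_conj_symm, ← (b.hasSum_inner_mul_inner c ((A ^ n) a)).tsum_eq]
    congr with j
    rw [inner_pow_apply_eq_pow_mul_inner (hA j), inner_conj_symm]
    ring
  have hw : Summable fun j => ‖⟪b j, a⟫ * starRingEnd ℂ ⟪b j, c⟫‖ := by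
    simpa only [norm_mul, RCLike.norm_conj] using summable_norm_mul_norm_of_summable_sq
      (b.orthonormal.inner_products_summable (x := a))
      (b.orthonormal.inner_products_summable (x := c))
  have hgeo := (hasSum_div_one_sub_mul hw (fun j => (hη j).le)
    (z := starRingEnd ℂ (η k)) (by rw [RCLike.norm_conj]; exact hη k)).mul_left
    (starRingEnd ℂ ⟪b k, a⟫ * ⟪b k, c⟫)
  simp only [hparseval] at hgeo
  simpa only [mul_div_assoc', ← mul_assoc] using hgeo

end

theorem stmt7_general
    {H : Type*} [NormedAddCommGroup H] [InnerProductSpace ℂ H] [CompleteSpace H]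
    {J : Type*}
    (A : H →L[ℂ] H) (b : HilbertBasis J ℂ H) (η : J → ℂ)
    (heig : ∀ j, A (b j) = η j • b j) (hη : ∀ j, ‖η j‖ < 1)
    (a : H)
    (hBessel : ∃ K > (0 : ℝ), ∀ f : H, ∑' n : ℕ, ‖⟪f, (A ^ n) a⟫‖ ^ 2 ≤ K * ‖f‖ ^ 2)
    (c : H) :
    (∀ k : J, Summable fun j : J => (starRingEnd ℂ) ⟪b k, a⟫ * ⟪b k, c⟫ * ⟪b j, a⟫ * (starRingEnd ℂ) ⟪b j, c⟫ / (1 - η j * (starRingEnd ℂ) (η k))) ∧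
    Summable (fun k : J => ∑' j : J, (starRingEnd ℂ) ⟪b k, a⟫ * ⟪b k, c⟫ * ⟪b j, a⟫ * (starRingEnd ℂ) ⟪b j, c⟫ / (1 - η j * (starRingEnd ℂ) (η k))) ∧
    ((∑' n : ℕ, ‖⟪(A ^ n) a, c⟫‖ ^ 2 : ℝ) : ℂ) =
      ∑' k : J, ∑' j : J, (starRingEnd ℂ) ⟪b k, a⟫ * ⟪b k, c⟫ * ⟪b j, a⟫ * (starRingEnd ℂ) ⟪b j, c⟫ / (1 - η j * (starRingEnd ℂ) (η k)) := by
  obtain ⟨K, -, hK⟩ := hBessel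
  have hA := b.inner_apply_eq_mul_inner heig
  -- `hK` says nothing where the series diverges (`tsum` is then `0`), hence the detour via the span
  have horbit : ∀ f, Summable fun n => ‖⟪f, (A ^ n) a⟫‖ ^ 2 :=
    summable_sq_norm_inner_of_dense
      (Submodule.dense_iff_topologicalClosure_eq_top.mpr b.dense_span)
      (fun g hg => summable_sq_norm_inner_pow_apply_of_mem_span hA hη a hg) (fun g _ => hK g)
  obtain ⟨L, hL⟩ := exists_continuousLinearMap_hasSum_mul_inner horbit
    (x := fun n => starRingEnd ℂ ⟪(A ^ n) a, c⟫) (by simpa [norm_inner_symm] using horbit c)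
  have hLc : L c = ((∑' n : ℕ, ‖⟪(A ^ n) a, c⟫‖ ^ 2 : ℝ) : ℂ) := by
    rw [← (hL c).tsum_eq, Complex.ofReal_tsum]
    simp only [RCLike.conj_mul, Complex.ofReal_pow]
    rfl
  have hcoord : HasSum (fun k => ⟪b k, c⟫ * L (b k)) (L c) := by
    simpa [b.repr_apply_apply] using (b.hasSum_repr c).mapL L
  have hLb (k : J) : ⟪b k, c⟫ * L (b k) = starRingEnd ℂ ⟪b k, a⟫ * ⟪b k, c⟫ *
      ∑' n : ℕ, starRingEnd ℂ ⟪(A ^ n) a, c⟫ * starRingEnd ℂ (η k) ^ n := by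
    rw [← (hL (b k)).tsum_eq, ← tsum_mul_left, ← tsum_mul_left]
    congr with n
    rw [← inner_conj_symm ((A ^ n) a) (b k), inner_pow_apply_eq_pow_mul_inner (hA k), map_mul,
      map_pow]
    ring
  have hrow (k : J) := b.hasSum_coeff_div_one_sub_mul_conj hA hη a c k
  refine ⟨fun k => (hrow k).summable, ?_, ?_⟩
  · simpa only [(hrow _).tsum_eq, hLb] using hcoord.summable
  · simpa only [(hrow _).tsum_eq, hLb, hLc] using hcoord.tsum_eq.symm

theorem stmt7
    {H : Type*} [NormedAddCommGroup H] [InnerProductSpace ℂ H] [CompleteSpace H]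
    [TopologicalSpace.SeparableSpace H]
    {J : Type*} [Countable J]
    (A : H →L[ℂ] H) (b : HilbertBasis J ℂ H) (η : J → ℂ)
    (heig : ∀ j, A (b j) = η j • b j) (hη : ∀ j, ‖η j‖ < 1)
    (a : H)
    (hBessel : ∃ K > (0 : ℝ), ∀ f : H, ∑' n : ℕ, ‖⟪f, (A ^ n) a⟫‖ ^ 2 ≤ K * ‖f‖ ^ 2)
    (c : H) :
    (∀ k : J, Summable fun j : J => (starRingEnd ℂ) ⟪b k, a⟫ * ⟪b k, c⟫ * ⟪b j, a⟫ * (starRingEnd ℂ) ⟪b j, c⟫ / (1 - η j * (starRingEnd ℂ) (η k))) ∧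
    Summable (fun k : J => ∑' j : J, (starRingEnd ℂ) ⟪b k, a⟫ * ⟪b k, c⟫ * ⟪b j, a⟫ * (starRingEnd ℂ) ⟪b j, c⟫ / (1 - η j * (starRingEnd ℂ) (η k))) ∧
    ((∑' n : ℕ, ‖⟪(A ^ n) a, c⟫‖ ^ 2 : ℝ) : ℂ) =
      ∑' k : J, ∑' j : J, (starRingEnd ℂ) ⟪b k, a⟫ * ⟪b k, c⟫ * ⟪b j, a⟫ * (starRingEnd ℂ) ⟪b j, c⟫ / (1 - η j * (starRingEnd ℂ) (η k)) :=
  stmt7_general A b η heig hη a hBessel c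
end
end

section
/- Let H be an infinite-dimensional complex separable Hilbert space, let A ∈ B(H) be a normal operator, and let G ⊂ H be a finite set of vectors such that {e^{tA}g}_{g∈G, t∈[0,∞)} is a semi-continuous frame for H. Then for every ε > 0, the spectrum of A intersects the half-plane {z ∈ ℂ : Re(z) > −ε}; that is, there exists z ∈ σ(A) with Re(z) > −ε. -/
/-!
If the spectrum of the normal operator `A` lay in `Re z ≤ -ε`, the continuous functional calculus
would give `‖e^{tA}‖ ≤ e^{-εt}`, so every orbit `t ↦ e^{tA} g` would be square integrable on
`[0, ∞)`. Testing the lower frame bound on the first `N` vectors of an orthonormal sequence and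
applying Bessel's inequality under the integral gives `N c ≤ ∑_{g ∈ G} ∫ ‖e^{tA} g‖²` for every
`N`, which is absurd.
-/

open MeasureTheory
open scoped ComplexInnerProductSpace

noncomputable section

variable {H : Type*} [NormedAddCommGroup H] [InnerProductSpace ℂ H] [CompleteSpace H]

open scoped InnerProductSpace

theorem exists_orthonormal_nat_of_not_finiteDimensional {𝕜 E : Type*} [RCLike 𝕜]
    [NormedAddCommGroup E] [InnerProductSpace 𝕜 E] (hinf : ¬ FiniteDimensional 𝕜 E) :
    ∃ e : ℕ → E, Orthonormal 𝕜 e := by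
  let b := Module.Basis.ofVectorSpace 𝕜 E
  have : Infinite (Module.Basis.ofVectorSpaceIndex 𝕜 E) :=
    not_finite_iff_infinite.1 fun _ => hinf (.of_basis b)
  exact ⟨_, InnerProductSpace.gramSchmidtNormed_orthonormal
    (b.linearIndependent.comp _ (Infinite.natEmbedding _).injective)⟩

section Bessel

variable {𝕜 E α ι : Type*} [RCLike 𝕜] [NormedAddCommGroup E] [InnerProductSpace 𝕜 E]
  [MeasurableSpace α] {μ : Measure α}

theorem Orthonormal.sum_integral_norm_inner_sq_le {e : ι → E} (he : Orthonormal 𝕜 e)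
    (s : Finset ι) {F : α → E} (hF : AEStronglyMeasurable F μ)
    (hint : Integrable (fun t => ‖F t‖ ^ 2) μ) :
    ∑ i ∈ s, ∫ t, ‖⟪e i, F t⟫_𝕜‖ ^ 2 ∂μ ≤ ∫ t, ‖F t‖ ^ 2 ∂μ := by
  have hint_i : ∀ i, Integrable (fun t => ‖⟪e i, F t⟫_𝕜‖ ^ 2) μ := fun i =>
    hint.mono' ((aestronglyMeasurable_const.inner hF).norm.pow 2) <| .of_forall fun t => by
      simpa using he.sum_inner_products_le (F t) (s := {i})
  rw [← integral_finsetSum _ fun i _ => hint_i i]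
  exact integral_mono (integrable_finsetSum _ fun i _ => hint_i i) hint
    fun t => he.sum_inner_products_le (F t)

theorem exists_sum_integral_norm_inner_sq_lt (hinf : ¬ FiniteDimensional 𝕜 E) (G : Finset ι)
    {F : ι → α → E} (hF : ∀ g, AEStronglyMeasurable (F g) μ)
    (hint : ∀ g, Integrable (fun t => ‖F g t‖ ^ 2) μ) {c : ℝ} (hc : 0 < c) :
    ∃ f : E, ∑ g ∈ G, ∫ t, ‖⟪f, F g t⟫_𝕜‖ ^ 2 ∂μ < c * ‖f‖ ^ 2 := by
  obtain ⟨e, he⟩ := exists_orthonormal_nat_of_not_finiteDimensional hinf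
  by_contra! hframe
  set B := ∑ g ∈ G, ∫ t, ‖F g t‖ ^ 2 ∂μ
  obtain ⟨N, hN⟩ := exists_nat_gt (B / c)
  have : N * c ≤ B := calc
    N * c = ∑ n ∈ Finset.range N, c * ‖e n‖ ^ 2 := by simp [he.1, mul_comm]
    _ ≤ ∑ n ∈ Finset.range N, ∑ g ∈ G, ∫ t, ‖⟪e n, F g t⟫_𝕜‖ ^ 2 ∂μ :=
      Finset.sum_le_sum fun n _ => hframe (e n)
    _ = ∑ g ∈ G, ∑ n ∈ Finset.range N, ∫ t, ‖⟪e n, F g t⟫_𝕜‖ ^ 2 ∂μ := Finset.sum_comm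
    _ ≤ B := Finset.sum_le_sum fun g _ => he.sum_integral_norm_inner_sq_le _ (hF g) (hint g)
  rw [div_lt_iff₀ hc] at hN
  linarith

end Bessel

section Semigroup

variable (A : H →L[ℂ] H)

theorem continuous_expT_apply (g : H) : Continuous fun t => expT A t g :=
  (continuous_iff_continuousAt.2 fun _ => (NormedSpace.exp_analytic (𝕂 := ℂ) _).continuousAt).comp
    (Complex.continuous_ofReal.smul continuous_const) |>.clm_apply continuous_const

theorem expT_eq_cfc [IsStarNormal A] (t : ℝ) :
    expT A t = cfc (fun z => Complex.exp (t * z)) A := by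
  rw [cfc_comp_const_mul (t : ℂ) Complex.exp A, CFC.complex_exp_eq_normedSpace_exp, expT]

theorem norm_expT_le_of_forall_re_le [IsStarNormal A] {ω : ℝ}
    (hspec : ∀ z ∈ spectrum ℂ A, z.re ≤ ω) {t : ℝ} (ht : 0 ≤ t) :
    ‖expT A t‖ ≤ Real.exp (ω * t) := by
  rw [expT_eq_cfc]
  refine norm_cfc_le (Real.exp_nonneg _) fun z hz => ?_
  rw [Complex.norm_exp, Real.exp_le_exp, Complex.re_ofReal_mul, mul_comm]
  exact mul_le_mul_of_nonneg_right (hspec z hz) ht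

theorem integrableOn_norm_expT_apply_sq [IsStarNormal A] {ω : ℝ} (hω : ω < 0)
    (hspec : ∀ z ∈ spectrum ℂ A, z.re ≤ ω) (g : H) :
    IntegrableOn (fun t => ‖expT A t g‖ ^ 2) (Set.Ici 0) := by
  have hdom : IntegrableOn (fun t => Real.exp (2 * ω * t) * ‖g‖ ^ 2) (Set.Ici 0) :=
    (integrableOn_Ici_iff_integrableOn_Ioi).2
      ((integrableOn_exp_mul_Ioi (by linarith) 0).mul_const _)
  refine hdom.mono' ((continuous_expT_apply A g).norm.pow 2).aestronglyMeasurable ?_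
  filter_upwards [ae_restrict_mem measurableSet_Ici] with t (ht : 0 ≤ t)
  calc ‖‖expT A t g‖ ^ 2‖ = ‖expT A t g‖ ^ 2 := by simp
    _ ≤ (Real.exp (ω * t) * ‖g‖) ^ 2 := by
      gcongr
      exact (expT A t).le_of_opNorm_le (norm_expT_le_of_forall_re_le A hspec ht) g
    _ = Real.exp (2 * ω * t) * ‖g‖ ^ 2 := by
      rw [mul_pow, ← Real.exp_nat_mul]
      ring_nf

end Semigroup

theorem stmt15_general
    {H : Type*} [NormedAddCommGroup H] [InnerProductSpace ℂ H] [CompleteSpace H]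
    (hinf : ¬ FiniteDimensional ℂ H)
    (A : H →L[ℂ] H)
    (hnormal : A.comp (ContinuousLinearMap.adjoint A) = (ContinuousLinearMap.adjoint A).comp A)
    (G : Finset H)
    (hframe : ∃ c > (0 : ℝ), ∃ C > (0 : ℝ), ∀ f : H,
      c * ‖f‖ ^ 2 ≤ ∑ g ∈ G, ∫ t in Set.Ici (0 : ℝ), ‖⟪f, expT A t g⟫‖ ^ 2 ∧
      ∑ g ∈ G, ∫ t in Set.Ici (0 : ℝ), ‖⟪f, expT A t g⟫‖ ^ 2 ≤ C * ‖f‖ ^ 2) :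
    ∀ ε > (0 : ℝ), ∃ z ∈ spectrum ℂ A, -ε < z.re := by
  intro ε hε
  by_contra! hspec
  have : IsStarNormal A :=
    ⟨by rw [Commute, SemiconjBy, ContinuousLinearMap.star_eq_adjoint]; exact hnormal.symm⟩
  obtain ⟨c, hc, _, -, hfr⟩ := hframe
  obtain ⟨f, hf⟩ := exists_sum_integral_norm_inner_sq_lt hinf G
    (fun g => (continuous_expT_apply A g).aestronglyMeasurable)
    (integrableOn_norm_expT_apply_sq A (neg_lt_zero.2 hε) hspec) hc
  exact (hfr f).1.not_gt hf

theorem stmt15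
    {H : Type*} [NormedAddCommGroup H] [InnerProductSpace ℂ H] [CompleteSpace H]
    [TopologicalSpace.SeparableSpace H]
    (hinf : ¬ FiniteDimensional ℂ H)
    (A : H →L[ℂ] H)
    (hnormal : A.comp (ContinuousLinearMap.adjoint A) = (ContinuousLinearMap.adjoint A).comp A)
    (G : Finset H)
    (hframe : ∃ c > (0 : ℝ), ∃ C > (0 : ℝ), ∀ f : H,
      c * ‖f‖ ^ 2 ≤ ∑ g ∈ G, ∫ t in Set.Ici (0 : ℝ), ‖⟪f, expT A t g⟫‖ ^ 2 ∧
      ∑ g ∈ G, ∫ t in Set.Ici (0 : ℝ), ‖⟪f, expT A t g⟫‖ ^ 2 ≤ C * ‖f‖ ^ 2) :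
    ∀ ε > (0 : ℝ), ∃ z ∈ spectrum ℂ A, -ε < z.re :=
  stmt15_general hinf A hnormal G hframe

end
end

section
/- Let H be a complex separable Hilbert space, A ∈ B(H), and G ⊂ H a countable Bessel system with constant K > 0. Suppose ‖e^{tA}‖ ≤ M e^{ωt} for all t ≥ 0, where M ≥ 1 and ω < 0. Let T = {t_j : j ∈ ℕ} ⊂ [0,∞) be an increasing sequence with δ₀ := inf_{j∈ℕ} (t_{j+1} − t_j) > 0 (so that t_j ≥ (j−1)δ₀ for all j). Then Σ_{j∈ℕ} Σ_{g∈G} |⟨f, e^{t_j A} g⟩|² ≤ (K M² / (1 − e^{2ωδ₀})) ‖f‖² for all f ∈ H; in particular {e^{t_j A}g}_{g∈G, j∈ℕ} is a Bessel system in H. -/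
open MeasureTheory
open scoped ComplexInnerProductSpace

noncomputable section

variable {H : Type*} [NormedAddCommGroup H] [InnerProductSpace ℂ H] [CompleteSpace H]

/-!
Passing to the adjoint, `∑_g |⟨f, e^{t_j A} g⟩|² = ∑_g |⟨(e^{t_j A})* f, g⟩|² ≤ K M² e^{2ω t_j} ‖f‖²`.
Separation gives `t_j ≥ j δ₀`, so with `ω < 0` the `j`-th term is at most `K M² ‖f‖² r^j` for
`r = e^{2ωδ₀} < 1`, and summing the geometric series yields the constant `K M² / (1 - r)`.
-/

theorem tsum_norm_inner_apply_sq_le {ι : Type*} (v : ι → H) {K : ℝ} (hK : 0 ≤ K)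
    (hv : ∀ f : H, ∑' i, ‖⟪f, v i⟫‖ ^ 2 ≤ K * ‖f‖ ^ 2) (T : H →L[ℂ] H) (f : H) :
    ∑' i, ‖⟪f, T (v i)⟫‖ ^ 2 ≤ K * ‖T‖ ^ 2 * ‖f‖ ^ 2 := by
  have hadjoint : ‖T.adjoint f‖ ≤ ‖T‖ * ‖f‖ := by
    simpa only [LinearIsometryEquiv.norm_map] using T.adjoint.le_opNorm f
  calc ∑' i, ‖⟪f, T (v i)⟫‖ ^ 2 = ∑' i, ‖⟪T.adjoint f, v i⟫‖ ^ 2 := by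
        simp only [ContinuousLinearMap.adjoint_inner_left]
    _ ≤ K * ‖T.adjoint f‖ ^ 2 := hv _
    _ ≤ K * (‖T‖ * ‖f‖) ^ 2 := by gcongr
    _ = K * ‖T‖ ^ 2 * ‖f‖ ^ 2 := by ring

theorem add_nat_mul_le_of_le_sub_succ {t : ℕ → ℝ} {δ : ℝ} (hsep : ∀ j, δ ≤ t (j + 1) - t j)
    (j : ℕ) : t 0 + j * δ ≤ t j := by
  induction j with
  | zero => simp
  | succ n ih =>
    push_cast
    linarith [hsep n]

theorem exp_mul_sq_le_exp_pow {ω s δ : ℝ} (hω : ω ≤ 0) {j : ℕ} (hs : j * δ ≤ s) :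
    Real.exp (ω * s) ^ 2 ≤ Real.exp (2 * ω * δ) ^ j := by
  rw [sq, ← Real.exp_add, ← Real.exp_nat_mul, Real.exp_le_exp]
  nlinarith

theorem tsum_le_div_one_sub_of_le_geometric {a : ℕ → ℝ} {C r : ℝ} (ha : ∀ j, 0 ≤ a j)
    (hr₀ : 0 ≤ r) (hr₁ : r < 1) (hle : ∀ j, a j ≤ C * r ^ j) :
    ∑' j, a j ≤ C / (1 - r) := by
  have hgeom : Summable fun j => C * r ^ j := (summable_geometric_of_lt_one hr₀ hr₁).mul_left C
  calc ∑' j, a j ≤ ∑' j, C * r ^ j :=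
        (hgeom.of_nonneg_of_le ha hle).tsum_le_tsum hle hgeom
    _ = C / (1 - r) := by rw [tsum_mul_left, tsum_geometric_of_lt_one hr₀ hr₁, div_eq_mul_inv]

theorem stmt16_general
    {H : Type*} [NormedAddCommGroup H] [InnerProductSpace ℂ H] [CompleteSpace H]
    (A : H →L[ℂ] H) (G : Set H)
    (K : ℝ) (hK : 0 < K)
    (hG : ∀ f : H, ∑' g : G, ‖⟪f, (g : H)⟫‖ ^ 2 ≤ K * ‖f‖ ^ 2)
    (M ω : ℝ) (hω : ω < 0)
    (hA : ∀ t : ℝ, 0 ≤ t → ‖expT A t‖ ≤ M * Real.exp (ω * t))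
    (t : ℕ → ℝ) (ht0 : ∀ j, 0 ≤ t j)
    (δ₀ : ℝ) (hδ₀ : 0 < δ₀) (hsep : ∀ j, δ₀ ≤ t (j + 1) - t j) :
    ∀ f : H,
      ∑' j : ℕ, ∑' g : G, ‖⟪f, expT A (t j) (g : H)⟫‖ ^ 2 ≤
        K * M ^ 2 / (1 - Real.exp (2 * ω * δ₀)) * ‖f‖ ^ 2 := by
  intro f
  have hr₁ : Real.exp (2 * ω * δ₀) < 1 := Real.exp_lt_one_iff.mpr (by nlinarith)
  have hterm : ∀ j, ∑' g : G, ‖⟪f, expT A (t j) (g : H)⟫‖ ^ 2 ≤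
      K * M ^ 2 * ‖f‖ ^ 2 * Real.exp (2 * ω * δ₀) ^ j := by
    intro j
    have hnorm : ‖expT A (t j)‖ ^ 2 ≤ M ^ 2 * Real.exp (2 * ω * δ₀) ^ j := by
      have htj : j * δ₀ ≤ t j := by linarith [add_nat_mul_le_of_le_sub_succ hsep j, ht0 0]
      calc ‖expT A (t j)‖ ^ 2 ≤ (M * Real.exp (ω * t j)) ^ 2 := by gcongr; exact hA _ (ht0 j)
        _ ≤ M ^ 2 * Real.exp (2 * ω * δ₀) ^ j := by
          rw [mul_pow]; gcongr; exact exp_mul_sq_le_exp_pow hω.le htj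
    calc _ ≤ K * ‖expT A (t j)‖ ^ 2 * ‖f‖ ^ 2 :=
          tsum_norm_inner_apply_sq_le (fun g : G => (g : H)) hK.le hG _ f
      _ ≤ K * (M ^ 2 * Real.exp (2 * ω * δ₀) ^ j) * ‖f‖ ^ 2 := by gcongr
      _ = _ := by ring
  calc _ ≤ K * M ^ 2 * ‖f‖ ^ 2 / (1 - Real.exp (2 * ω * δ₀)) :=
        tsum_le_div_one_sub_of_le_geometric (fun j => tsum_nonneg fun _ => by positivity)
          (Real.exp_pos _).le hr₁ hterm
    _ = _ := by ring

theorem stmt16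
    {H : Type*} [NormedAddCommGroup H] [InnerProductSpace ℂ H] [CompleteSpace H]
    [TopologicalSpace.SeparableSpace H]
    (A : H →L[ℂ] H) (G : Set H) (hGc : G.Countable)
    (K : ℝ) (hK : 0 < K)
    (hG : ∀ f : H, ∑' g : G, ‖⟪f, (g : H)⟫‖ ^ 2 ≤ K * ‖f‖ ^ 2)
    (M ω : ℝ) (hM : 1 ≤ M) (hω : ω < 0)
    (hA : ∀ t : ℝ, 0 ≤ t → ‖expT A t‖ ≤ M * Real.exp (ω * t))
    (t : ℕ → ℝ) (ht0 : ∀ j, 0 ≤ t j) (hmono : StrictMono t)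
    (δ₀ : ℝ) (hδ₀ : 0 < δ₀) (hsep : ∀ j, δ₀ ≤ t (j + 1) - t j) :
    ∀ f : H,
      ∑' j : ℕ, ∑' g : G, ‖⟪f, expT A (t j) (g : H)⟫‖ ^ 2 ≤
        K * M ^ 2 / (1 - Real.exp (2 * ω * δ₀)) * ‖f‖ ^ 2 :=
  stmt16_general A G K hK hG M ω hω hA t ht0 δ₀ hδ₀ hsep

end
end
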